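/- arXiv:2306.15563 — 3 statements merged into one kernel-verified Lean document; each statement's English description precedes it below -/
import Mathlib

section
/- Let ε > 0, t, d, e, f ∈ ℝ and δ > 0. Suppose s is real-analytic on a neighbourhood of 0 in [0, δ), satisfies s(0) = 0, and satisfies the radial hedgehog ODE ε²(s''(r) + (2/r)s'(r) − (6/r²)s(r)) = t·s(r) − √6·s(r)² + (4/3)s(r)³ + (2d/9)s(r)⁴ + (4e/9 + 2(f−e)/27)s(r)⁵ for all r ∈ (0, δ). Then s'(0) = 0. -/
noncomputable section
open MeasureTheory

/-- The radial hedgehog ODE at radius `r`: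
`ε²(s'' + (2/r)s' − (6/r²)s) = t·s − √6·s² + (4/3)s³ + (2d/9)s⁴ + (4e/9 + 2(f−e)/27)s⁵`. -/
def RHode (ε t d e f : ℝ) (s : ℝ → ℝ) (r : ℝ) : Prop :=
  ε ^ 2 * (deriv (deriv s) r + 2 / r * deriv s r - 6 / r ^ 2 * s r)
    = t * s r - Real.sqrt 6 * (s r) ^ 2 + 4 / 3 * (s r) ^ 3
      + 2 * d / 9 * (s r) ^ 4 + (4 * e / 9 + 2 * (f - e) / 27) * (s r) ^ 5

lemma analyticAt_deriv_aux {g : ℝ → ℝ} {x : ℝ} (h : AnalyticAt ℝ g x) :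
    AnalyticAt ℝ (deriv g) x := by
  obtain ⟨u, hu, huo, hxu⟩ := eventually_nhds_iff.mp h.eventually_analyticAt
  exact (AnalyticOnNhd.deriv (fun y hy => hu y hy)) x hxu

/-- A real-analytic solution of the radial hedgehog ODE vanishing at the
origin satisfies `s'(0) = 0`. -/
theorem radial_hedgehog_deriv_zero_at_origin
    (ε t d e f δ : ℝ) (hε : 0 < ε) (hδ : 0 < δ) (s : ℝ → ℝ)
    (hs : AnalyticAt ℝ s 0) (h0 : s 0 = 0)
    (hode : ∀ r ∈ Set.Ioo (0:ℝ) δ, RHode ε t d e f s r) :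
    deriv s 0 = 0 := by
  set a := deriv s 0 with ha
  have hs1 : AnalyticAt ℝ (deriv s) 0 := analyticAt_deriv_aux hs
  have hs2 : AnalyticAt ℝ (deriv (deriv s)) 0 := analyticAt_deriv_aux hs1
  -- the slope of s at 0 tends to a
  have hslope : Filter.Tendsto (fun r => s r / r) (nhdsWithin 0 (Set.Ioi 0)) (nhds a) := by
    have hd := hs.differentiableAt.hasDerivAt
    rw [hasDerivAt_iff_tendsto_slope] at hd
    have h2 := hd.mono_left (nhdsWithin_mono 0 (fun x hx => ne_of_gt hx))
    refine h2.congr (fun r => ?_)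
    simp [slope, h0]
    ring
  -- left-hand side times r tends to -4ε²a
  have hT0 : Filter.Tendsto (fun r : ℝ => r * deriv (deriv s) r)
      (nhdsWithin 0 (Set.Ioi 0)) (nhds (0 * deriv (deriv s) 0)) :=
    ((continuous_id.continuousAt.mono_left nhdsWithin_le_nhds).mul
      (hs2.continuousAt.mono_left nhdsWithin_le_nhds))
  have hT1 : Filter.Tendsto (deriv s) (nhdsWithin 0 (Set.Ioi 0)) (nhds a) :=
    hs1.continuousAt.mono_left nhdsWithin_le_nhds
  have hF : Filter.Tendsto
      (fun r : ℝ => ε ^ 2 * (r * deriv (deriv s) r + 2 * deriv s r - 6 * (s r / r)))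
      (nhdsWithin 0 (Set.Ioi 0))
      (nhds (ε ^ 2 * (0 * deriv (deriv s) 0 + 2 * a - 6 * a))) :=
    ((hT0.add (hT1.const_mul 2)).sub (hslope.const_mul 6)).const_mul (ε ^ 2)
  -- right-hand side times r tends to 0
  have hP : Filter.Tendsto
      (fun r : ℝ => r * (t * s r - Real.sqrt 6 * (s r) ^ 2 + 4 / 3 * (s r) ^ 3
        + 2 * d / 9 * (s r) ^ 4 + (4 * e / 9 + 2 * (f - e) / 27) * (s r) ^ 5))
      (nhdsWithin 0 (Set.Ioi 0)) (nhds 0) := by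
    have hc : ContinuousAt s 0 := hs.continuousAt
    have : Filter.Tendsto
        (fun r : ℝ => r * (t * s r - Real.sqrt 6 * (s r) ^ 2 + 4 / 3 * (s r) ^ 3
          + 2 * d / 9 * (s r) ^ 4 + (4 * e / 9 + 2 * (f - e) / 27) * (s r) ^ 5))
        (nhds 0) (nhds (0 * (t * s 0 - Real.sqrt 6 * (s 0) ^ 2 + 4 / 3 * (s 0) ^ 3
          + 2 * d / 9 * (s 0) ^ 4 + (4 * e / 9 + 2 * (f - e) / 27) * (s 0) ^ 5))) := by
      apply Filter.Tendsto.mul continuous_id.continuousAt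
      exact ((((hc.const_mul t).sub ((hc.pow 2).const_mul (Real.sqrt 6))).add
        ((hc.pow 3).const_mul (4/3))).add ((hc.pow 4).const_mul (2*d/9))).add
        ((hc.pow 5).const_mul (4 * e / 9 + 2 * (f - e) / 27))
    simpa [h0] using this.mono_left nhdsWithin_le_nhds
  -- the two functions agree eventually on 𝓝[>]0
  have hEq : ∀ᶠ r in nhdsWithin (0:ℝ) (Set.Ioi 0),
      ε ^ 2 * (r * deriv (deriv s) r + 2 * deriv s r - 6 * (s r / r))
      = r * (t * s r - Real.sqrt 6 * (s r) ^ 2 + 4 / 3 * (s r) ^ 3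
        + 2 * d / 9 * (s r) ^ 4 + (4 * e / 9 + 2 * (f - e) / 27) * (s r) ^ 5) := by
    filter_upwards [Ioo_mem_nhdsGT_of_mem (Set.left_mem_Ico.mpr hδ)] with r hr
    have hode' := hode r hr
    have hr0 : r ≠ 0 := ne_of_gt hr.1
    have key : ε ^ 2 * (r * deriv (deriv s) r + 2 * deriv s r - 6 * (s r / r))
        = r * (ε ^ 2 * (deriv (deriv s) r + 2 / r * deriv s r - 6 / r ^ 2 * s r)) := by
      field_simp
    rw [key, hode']
  have hF' := hF.congr' hEq
  have huniq := tendsto_nhds_unique hF' hP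
  have hε2 : (ε:ℝ) ^ 2 ≠ 0 := pow_ne_zero 2 (ne_of_gt hε)
  have huniq2 : ε ^ 2 * (-(4 * a)) = 0 := by linear_combination huniq
  have h4 : -(4 * a) = 0 := (mul_eq_zero.mp huniq2).resolve_left hε2
  linarith
end
end

section
/- Let ε > 0 and t, d, e, f ∈ ℝ. Suppose s : [0,1] → ℝ is real-analytic on [0,1], satisfies the radial hedgehog ODE ε²(s''(r) + (2/r)s'(r) − (6/r²)s(r)) = t·s(r) − √6·s(r)² + (4/3)s(r)³ + (2d/9)s(r)⁴ + (4e/9 + 2(f−e)/27)s(r)⁵ for all r ∈ (0,1], satisfies s(r) ≥ 0 for all r ∈ [0,1], and satisfies s(1) > 0. Then s(r) > 0 for every r ∈ (0,1]. -/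
noncomputable section
open MeasureTheory

/-!
At a zero `a ∈ (0,1)` of the nonnegative solution `s`, `s` has a local minimum, so `s'(a) = 0`.
Since the right-hand side is `s` times a polynomial in `s`, the ODE reads as a *linear* second-order
equation `s'' = u s' + v s` with coefficients analytic near `a > 0`. Zero Cauchy data then force
`s ≡ 0` near `a`: if `s` had finite order `n ≥ 2` at `a`, then `s''` would have order `n - 2` while
`u s' + v s` has order at least `n - 1`. By the identity theorem `s ≡ 0` on `[0,1]`,
contradicting `s(1) > 0`.
-/

open Filter Topology

theorem AnalyticAt.eventuallyEq_zero_of_deriv_deriv_eq {𝕜 E : Type*}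
    [NontriviallyNormedField 𝕜] [CharZero 𝕜] [NormedAddCommGroup E] [NormedSpace 𝕜 E]
    [CompleteSpace E] {f : 𝕜 → E} {u v : 𝕜 → 𝕜} {a : 𝕜}
    (hf : AnalyticAt 𝕜 f a) (hu : AnalyticAt 𝕜 u a) (hv : AnalyticAt 𝕜 v a)
    (h₀ : f a = 0) (h₁ : deriv f a = 0)
    (hode : deriv (deriv f) =ᶠ[𝓝 a] u • deriv f + v • f) :
    f =ᶠ[𝓝 a] 0 := by
  set k := analyticOrderAt (deriv (deriv f)) a
  have hf' : analyticOrderAt (deriv f) a = k + 1 := by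
    simpa [h₁] using hf.deriv.analyticOrderAt_deriv_add_one.symm
  have hf'' : analyticOrderAt f a = k + 1 + 1 := by
    simpa [h₀, hf'] using hf.analyticOrderAt_deriv_add_one.symm
  have hk : k + 1 ≤ k := calc
    k + 1 ≤ min (analyticOrderAt (u • deriv f) a) (analyticOrderAt (v • f) a) := by
      rw [analyticOrderAt_smul hu hf.deriv, analyticOrderAt_smul hv hf, hf', hf'']
      exact le_min le_add_self (le_add_self.trans' le_self_add)
    _ ≤ analyticOrderAt (u • deriv f + v • f) a := le_analyticOrderAt_add
    _ = k := (analyticOrderAt_congr hode).symm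
  have hk_top : k = ⊤ := by
    by_contra hne
    exact (ENat.lt_add_one_iff hne).2 le_rfl |>.not_ge hk
  exact analyticOrderAt_eq_top.mp (by simpa [hk_top] using hf'')

def hedgehogPotential (ε t d e f : ℝ) (s : ℝ → ℝ) (r : ℝ) : ℝ :=
  6 / r ^ 2 + (t - Real.sqrt 6 * s r + 4 / 3 * s r ^ 2 + 2 * d / 9 * s r ^ 3
    + (4 * e / 9 + 2 * (f - e) / 27) * s r ^ 4) / ε ^ 2

theorem AnalyticAt.hedgehogPotential {s : ℝ → ℝ} {r : ℝ} (hs : AnalyticAt ℝ s r) (hr : r ≠ 0)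
    (ε t d e f : ℝ) : AnalyticAt ℝ (hedgehogPotential ε t d e f s) r := by
  unfold _root_.hedgehogPotential
  fun_prop (disch := simp [hr])

theorem RHode.deriv_deriv_eq {ε t d e f : ℝ} {s : ℝ → ℝ} {r : ℝ} (h : RHode ε t d e f s r)
    (hε : ε ≠ 0) (hr : r ≠ 0) :
    deriv (deriv s) r = -(2 / r) * deriv s r + hedgehogPotential ε t d e f s r * s r := by
  unfold RHode at h
  unfold hedgehogPotential
  field_simp at h ⊢
  linear_combination h

/-- Strict positivity: a nonnegative real-analytic solution of the radial
hedgehog ODE with `s(1) > 0` is strictly positive on `(0,1]`. -/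
theorem radial_hedgehog_strict_positivity
    (ε t d e f : ℝ) (hε : 0 < ε) (s : ℝ → ℝ)
    (hs : AnalyticOnNhd ℝ s (Set.Icc 0 1))
    (hode : ∀ r ∈ Set.Ioc (0:ℝ) 1, RHode ε t d e f s r)
    (hnonneg : ∀ r ∈ Set.Icc (0:ℝ) 1, 0 ≤ s r) (h1 : 0 < s 1) :
    ∀ r ∈ Set.Ioc (0:ℝ) 1, 0 < s r := by
  intro a ha
  by_contra hle
  have haI : a ∈ Set.Icc (0:ℝ) 1 := Set.Ioc_subset_Icc_self ha
  have hsa : s a = 0 := le_antisymm (not_lt.mp hle) (hnonneg a haI)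
  have ha₁ : a < 1 := ha.2.lt_of_ne (by rintro rfl; exact h1.ne' hsa)
  have hnhds : Set.Ioo 0 1 ∈ 𝓝 a := Ioo_mem_nhds ha.1 ha₁
  have hmin : IsLocalMin s a := mem_of_superset hnhds fun r hr ↦
    hsa ▸ hnonneg r (Set.Ioo_subset_Icc_self hr)
  have hlinear : deriv (deriv s) =ᶠ[𝓝 a]
      (fun r : ℝ ↦ -(2 / r)) • deriv s + hedgehogPotential ε t d e f s • s := by
    filter_upwards [hnhds] with r hr
    exact (hode r ⟨hr.1, hr.2.le⟩).deriv_deriv_eq hε.ne' hr.1.ne'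
  have hloc : s =ᶠ[𝓝 a] 0 :=
    (hs a haI).eventuallyEq_zero_of_deriv_deriv_eq (by fun_prop (disch := simp [ha.1.ne']))
      ((hs a haI).hedgehogPotential ha.1.ne' ε t d e f) hsa hmin.deriv_eq_zero hlinear
  exact h1.ne' <| hs.eqOn_zero_of_preconnected_of_eventuallyEq_zero isPreconnected_Icc haI hloc
    (Set.right_mem_Icc.2 zero_le_one)
end
end

section
/- Let Q be a real symmetric traceless 3×3 matrix and let |Q| denote its Frobenius norm (|Q|² = tr Q²). Then −(1/√6)|Q|³ ≤ tr Q³ ≤ (1/√6)|Q|³. -/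
/-!
Diagonalising `Q` by the spectral theorem turns `tr Q²` and `tr Q³` into the power sums
`p₂ = a² + b² + c²` and `p₃ = a³ + b³ + c³` of its eigenvalues, and `a + b + c = 0`.
For such triples `p₂³ - 6 p₃² = 2 ((a - b) (b - c) (c - a))²`, twice the discriminant of the
characteristic polynomial, so `6 p₃² ≤ p₂³`, which is the claim after taking square roots.
-/

noncomputable section
open MeasureTheory

abbrev E3 := EuclideanSpace ℝ (Fin 3)
abbrev Mat3 := Matrix (Fin 3) (Fin 3) ℝ

open Matrix Unitary in
theorem Matrix.IsHermitian.trace_pow_eq_sum_eigenvalues_pow {𝕜 n : Type*} [RCLike 𝕜]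
    [Fintype n] [DecidableEq n] {A : Matrix n n 𝕜} (hA : A.IsHermitian) (k : ℕ) :
    (A ^ k).trace = ∑ i, (hA.eigenvalues i : 𝕜) ^ k := by
  conv_lhs => rw [hA.spectral_theorem, ← map_pow, conjStarAlgAut_apply, trace_mul_cycle,
    coe_star_mul_self, one_mul, diagonal_pow, trace_diagonal]
  rfl

theorem sum_sq_pow_three_sub_six_mul_sum_pow_three_sq {a b c : ℝ} (h : a + b + c = 0) :
    (a ^ 2 + b ^ 2 + c ^ 2) ^ 3 - 6 * (a ^ 3 + b ^ 3 + c ^ 3) ^ 2 =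
      2 * ((a - b) * (b - c) * (c - a)) ^ 2 := by
  obtain rfl : c = -a - b := by linarith
  ring

theorem six_mul_sum_pow_three_sq_le_sum_sq_pow_three {a b c : ℝ} (h : a + b + c = 0) :
    6 * (a ^ 3 + b ^ 3 + c ^ 3) ^ 2 ≤ (a ^ 2 + b ^ 2 + c ^ 2) ^ 3 :=
  sub_nonneg.mp <| (sum_sq_pow_three_sub_six_mul_sum_pow_three_sq h).symm ▸ by positivity

theorem abs_le_of_six_mul_sq_le_pow_three {s t : ℝ} (hs : 0 ≤ s) (h : 6 * t ^ 2 ≤ s ^ 3) :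
    |t| ≤ 1 / √6 * √s ^ 3 := by
  refine abs_le_of_sq_le_sq ?_ (by positivity)
  rw [mul_pow, div_pow, Real.sq_sqrt (by norm_num), pow_right_comm, Real.sq_sqrt hs]
  linarith

/-- For a real symmetric traceless 3×3 matrix `Q`,
`−(1/√6)|Q|³ ≤ tr Q³ ≤ (1/√6)|Q|³` where `|Q|² = tr Q²`. -/
theorem trace_cube_bound (Q : Mat3) (hsymm : Q.IsSymm) (htr : Q.trace = 0) :
    -(1 / Real.sqrt 6) * Real.sqrt ((Q * Q).trace) ^ 3 ≤ (Q * Q * Q).trace ∧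
      (Q * Q * Q).trace ≤ (1 / Real.sqrt 6) * Real.sqrt ((Q * Q).trace) ^ 3 := by
  have hQ : Q.IsHermitian := hsymm
  set e := hQ.eigenvalues
  have hsum : e 0 + e 1 + e 2 = 0 := by
    simpa [hQ.trace_eq_sum_eigenvalues, Fin.sum_univ_three] using htr
  have hsq : (Q * Q).trace = e 0 ^ 2 + e 1 ^ 2 + e 2 ^ 2 := by
    rw [← sq, hQ.trace_pow_eq_sum_eigenvalues_pow, Fin.sum_univ_three]
    rfl
  have hcube : (Q * Q * Q).trace = e 0 ^ 3 + e 1 ^ 3 + e 2 ^ 3 := by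
    rw [← pow_three', hQ.trace_pow_eq_sum_eigenvalues_pow, Fin.sum_univ_three]
    rfl
  have hbound := abs_le_of_six_mul_sq_le_pow_three (hsq ▸ by positivity)
    (hsq ▸ hcube ▸ six_mul_sum_pow_three_sq_le_sum_sq_pow_three hsum)
  rw [neg_mul]
  exact abs_le.mp hbound
end
end
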